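/- Bracketing performance guarantee: let ẑ* be an optimal solution of the temporally aggregated GEP model for some consecutive clustering, let z* be an optimal solution of the full-scale GEP model, and let z̃ be any feasible solution of the full-scale model (in particular, one obtained by fixing the investment variables xᵍ, xˢ, bᵍ, bˢ to the values in ẑ* and optimizing the remaining variables). Then Ĵ(ẑ*) ≤ J(z*) ≤ J(z̃), i.e., the aggregated optimal value is a valid lower bound and the objective of the restricted feasible solution is a valid upper bound on the full-scale optimal value. -/

import Mathlib

open Finset

/-- Data of the full-scale GEP model. -/
structure GEPData (G N : Type) where
  /-- sampling time Δ (h) -/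
  delta : ℝ
  /-- capacity factors F_{g,t} -/
  F : G → ℕ → ℝ
  /-- energy demand D_t -/
  D : ℕ → ℝ
  /-- operational cost of generator g -/
  Cpg : G → ℝ
  /-- charging cost of storage n -/
  Cpc : N → ℝ
  /-- discharging cost of storage n -/
  Cpd : N → ℝ
  /-- cost of non-supplied energy -/
  Cns : ℝ
  /-- investment cost of generator g -/
  Cginv : G → ℝ
  /-- investment cost of storage n -/
  Csinv : N → ℝ
  /-- charging efficiency -/
  etac : N → ℝ
  /-- discharging efficiency -/
  etad : N → ℝ
  /-- energy-to-power ratio -/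
  Tn : N → ℝ
  /-- initial stored energy -/
  E0 : N → ℝ
  /-- minimum generator capacity -/
  Xgl : G → ℝ
  /-- maximum generator capacity -/
  Xgu : G → ℝ
  /-- minimum storage capacity -/
  Xsl : N → ℝ
  /-- maximum storage capacity -/
  Xsu : N → ℝ

/-- Decision variables of the (full-scale or aggregated) GEP model; time-indexed
variables are functions on ℕ, constrained only on the relevant horizon. -/
structure GEPVars (G N : Type) where
  xg : G → ℝ
  xs : N → ℝ
  bg : G → ℝ
  bs : N → ℝ
  pg : G → ℕ → ℝ
  es : N → ℕ → ℝ
  pc : N → ℕ → ℝ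
  pd : N → ℕ → ℝ
  ens : ℕ → ℝ

/-- Feasibility for the full-scale GEP model over horizon {0,…,T−1}. -/
def Feasible {G N : Type} [Fintype G] [Fintype N]
    (d : GEPData G N) (T : ℕ) (z : GEPVars G N) : Prop :=
  (∀ g, z.bg g = 0 ∨ z.bg g = 1) ∧
  (∀ n, z.bs n = 0 ∨ z.bs n = 1) ∧
  (∀ t < T, ∑ g : G, z.pg g t * d.delta
      + ∑ n : N, (z.pd n t - z.pc n t) * d.delta + z.ens t = d.D t) ∧
  (∀ n, ∀ t, t + 1 < T →
      z.es n (t + 1) = z.es n t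
        + (d.etac n * z.pc n t - d.etad n * z.pd n t) * d.delta) ∧
  (∀ n, z.es n 0 = d.E0 n) ∧
  (∀ g, ∀ t < T, 0 ≤ z.pg g t ∧ z.pg g t ≤ d.F g t * z.xg g) ∧
  (∀ n, ∀ t < T, 0 ≤ z.es n t ∧ z.es n t ≤ z.xs n * d.delta) ∧
  (∀ n, ∀ t < T, 0 ≤ z.pc n t ∧ z.pc n t ≤ z.xs n * d.delta / d.Tn n) ∧
  (∀ n, ∀ t < T, 0 ≤ z.pd n t ∧ z.pd n t ≤ z.xs n * d.delta / d.Tn n) ∧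
  (∀ n, z.bs n * d.Xsl n ≤ z.xs n ∧ z.xs n ≤ z.bs n * d.Xsu n) ∧
  (∀ g, z.bg g * d.Xgl g ≤ z.xg g ∧ z.xg g ≤ z.bg g * d.Xgu g) ∧
  (∀ t < T, 0 ≤ z.ens t)

/-- Objective function J of the full-scale GEP model. -/
noncomputable def objJ {G N : Type} [Fintype G] [Fintype N]
    (d : GEPData G N) (T : ℕ) (z : GEPVars G N) : ℝ :=
  ∑ g : G, d.Cginv g * z.xg g + ∑ n : N, d.Csinv n * z.xs n
    + ∑ t ∈ Finset.range T, ∑ g : G, d.Cpg g * z.pg g t * d.delta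
    + ∑ t ∈ Finset.range T,
        (∑ n : N, (d.Cpc n * z.pc n t + d.Cpd n * z.pd n t) * d.delta
          + d.Cns * z.ens t)

/-- A consecutive clustering (partition of {0,…,T−1} into K nonempty intervals of
consecutive indices), encoded by the first indices `start k` of the clusters. -/
structure ConsecClustering (T K : ℕ) where
  start : ℕ → ℕ
  start_zero : start 0 = 0
  start_last : start K = T
  start_lt : ∀ k < K, start k < start (k + 1)

/-- Number of time steps T_k in cluster k. -/
def ConsecClustering.Tk {T K : ℕ} (c : ConsecClustering T K) (k : ℕ) : ℕ :=
  c.start (k + 1) - c.start k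

/-- The set of (consecutive) time steps assigned to cluster k. -/
def ConsecClustering.cluster {T K : ℕ} (c : ConsecClustering T K) (k : ℕ) :
    Finset ℕ :=
  Finset.Ico (c.start k) (c.start (k + 1))

/-- Aggregated capacity factor F̂_{g,k}. -/
noncomputable def Fhat {G N : Type} (d : GEPData G N) {T K : ℕ} (c : ConsecClustering T K)
    (g : G) (k : ℕ) : ℝ :=
  (∑ t ∈ c.cluster k, d.F g t) / (c.Tk k : ℝ)

/-- Aggregated demand D̂_k. -/
noncomputable def Dhat {G N : Type} (d : GEPData G N) {T K : ℕ} (c : ConsecClustering T K)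
    (k : ℕ) : ℝ :=
  (∑ t ∈ c.cluster k, d.D t) / (c.Tk k : ℝ)

/-- Feasibility for the temporally aggregated GEP model over clusters {0,…,K−1}. -/
def AggFeasible {G N : Type} [Fintype G] [Fintype N]
    (d : GEPData G N) {T K : ℕ} (c : ConsecClustering T K) (z : GEPVars G N) :
    Prop :=
  (∀ g, z.bg g = 0 ∨ z.bg g = 1) ∧
  (∀ n, z.bs n = 0 ∨ z.bs n = 1) ∧
  (∀ k < K, ∑ g : G, z.pg g k * d.delta
      + ∑ n : N, (z.pd n k - z.pc n k) * d.delta + z.ens k = Dhat d c k) ∧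
  (∀ n, ∀ k, k + 1 < K →
      z.es n (k + 1) = z.es n k
        + (d.etac n * z.pc n k - d.etad n * z.pd n k) * (c.Tk k : ℝ) * d.delta) ∧
  (∀ n, z.es n 0 = d.E0 n) ∧
  (∀ g, ∀ k < K, 0 ≤ z.pg g k ∧ z.pg g k ≤ Fhat d c g k * z.xg g) ∧
  (∀ n, ∀ k < K, 0 ≤ z.es n k ∧ z.es n k ≤ z.xs n * d.delta) ∧
  (∀ n, ∀ k < K, 0 ≤ z.pc n k ∧ z.pc n k ≤ z.xs n * d.delta / d.Tn n) ∧
  (∀ n, ∀ k < K, 0 ≤ z.pd n k ∧ z.pd n k ≤ z.xs n * d.delta / d.Tn n) ∧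
  (∀ n, z.bs n * d.Xsl n ≤ z.xs n ∧ z.xs n ≤ z.bs n * d.Xsu n) ∧
  (∀ g, z.bg g * d.Xgl g ≤ z.xg g ∧ z.xg g ≤ z.bg g * d.Xgu g) ∧
  (∀ k < K, 0 ≤ z.ens k)

/-- Objective function Ĵ of the temporally aggregated GEP model. -/
noncomputable def objJagg {G N : Type} [Fintype G] [Fintype N]
    (d : GEPData G N) {T K : ℕ} (c : ConsecClustering T K) (z : GEPVars G N) :
    ℝ :=
  ∑ g : G, d.Cginv g * z.xg g + ∑ n : N, d.Csinv n * z.xs n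
    + ∑ k ∈ Finset.range K, (c.Tk k : ℝ) *
        (∑ g : G, d.Cpg g * z.pg g k * d.delta
          + ∑ n : N, (d.Cpc n * z.pc n k + d.Cpd n * z.pd n k) * d.delta
          + d.Cns * z.ens k)

/-- The aggregation ẑ of a full-scale assignment z: investment variables are kept,
time-indexed operational variables are averaged over each cluster, and the stored
energy is sampled at the first index of each cluster. -/
noncomputable def aggregate {G N : Type} {T K : ℕ} (c : ConsecClustering T K)
    (z : GEPVars G N) : GEPVars G N where
  xg := z.xg
  xs := z.xs
  bg := z.bg
  bs := z.bs
  pg := fun g k => (∑ t ∈ c.cluster k, z.pg g t) / (c.Tk k : ℝ)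
  es := fun n k => z.es n (c.start k)
  pc := fun n k => (∑ t ∈ c.cluster k, z.pc n t) / (c.Tk k : ℝ)
  pd := fun n k => (∑ t ∈ c.cluster k, z.pd n t) / (c.Tk k : ℝ)
  ens := fun k => (∑ t ∈ c.cluster k, z.ens t) / (c.Tk k : ℝ)


section Aux

variable {T K : ℕ}

lemma ConsecClustering.start_le_start (c : ConsecClustering T K) :
    ∀ j ≤ K, ∀ i ≤ j, c.start i ≤ c.start j := by
  intro j
  induction j with
  | zero =>
    intro _ i hi
    obtain rfl : i = 0 := Nat.le_zero.mp hi
    exact le_rfl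
  | succ j ih =>
    intro hj i hi
    rcases Nat.eq_or_lt_of_le hi with h | h
    · exact h ▸ le_rfl
    · exact le_trans (ih (by omega) i (by omega))
        (le_of_lt (c.start_lt j (by omega)))

lemma ConsecClustering.start_le_T (c : ConsecClustering T K) {k : ℕ} (hk : k ≤ K) :
    c.start k ≤ T := by
  have := c.start_le_start K le_rfl k hk
  have h2 := c.start_last
  omega

lemma ConsecClustering.start_lt_T (c : ConsecClustering T K) {k : ℕ} (hk : k < K) :
    c.start k < T := by
  have h1 := c.start_lt k hk
  have h2 := c.start_le_T (show k + 1 ≤ K by omega)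
  omega

lemma ConsecClustering.Tk_pos (c : ConsecClustering T K) {k : ℕ} (hk : k < K) :
    0 < c.Tk k :=
  Nat.sub_pos_of_lt (c.start_lt k hk)

lemma ConsecClustering.Tk_ne_zero (c : ConsecClustering T K) {k : ℕ} (hk : k < K) :
    ((c.Tk k : ℝ)) ≠ 0 :=
  Nat.cast_ne_zero.mpr (c.Tk_pos hk).ne'

lemma ConsecClustering.card_cluster (c : ConsecClustering T K) (k : ℕ) :
    (c.cluster k).card = c.Tk k := by
  simp [ConsecClustering.cluster, ConsecClustering.Tk]

lemma ConsecClustering.mem_cluster_lt (c : ConsecClustering T K) {k t : ℕ}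
    (hk : k < K) (ht : t ∈ c.cluster k) : t < T := by
  simp only [ConsecClustering.cluster, Finset.mem_Ico] at ht
  have := c.start_le_T (show k + 1 ≤ K by omega)
  omega

lemma ConsecClustering.sum_cluster (c : ConsecClustering T K) (f : ℕ → ℝ) :
    ∑ k ∈ Finset.range K, ∑ t ∈ c.cluster k, f t = ∑ t ∈ Finset.range T, f t := by
  have h : ∀ m, m ≤ K →
      ∑ k ∈ Finset.range m, ∑ t ∈ c.cluster k, f t
        = ∑ t ∈ Finset.Ico (c.start 0) (c.start m), f t := by
    intro m
    induction m with
    | zero => intro _; simp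
    | succ m ih =>
      intro hm
      rw [Finset.sum_range_succ, ih (by omega)]
      exact Finset.sum_Ico_consecutive f
        (c.start_le_start m (by omega) 0 (Nat.zero_le _))
        (le_of_lt (c.start_lt m (by omega)))
  rw [h K le_rfl, c.start_zero, c.start_last, Finset.range_eq_Ico]

lemma telescope (f g : ℕ → ℝ) (M : ℕ)
    (h : ∀ t, t + 1 ≤ M → f (t + 1) = f t + g t) (a : ℕ) :
    ∀ b, a ≤ b → b ≤ M → f b = f a + ∑ t ∈ Finset.Ico a b, g t := by
  intro b hab
  induction b, hab using Nat.le_induction with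
  | base => intro _; simp
  | succ b hab ih =>
    intro hbM
    rw [h b hbM, ih (by omega), Finset.sum_Ico_succ_top hab]
    ring

lemma agg_feasible {G N : Type} [Fintype G] [Fintype N]
    (d : GEPData G N) {T K : ℕ} (hT : 1 ≤ T) (c : ConsecClustering T K)
    (z : GEPVars G N) (hz : Feasible d T z) :
    AggFeasible d c (aggregate c z) := by
  obtain ⟨hbg, hbs, hbal, hdyn, hE0, hpg, hes, hpc, hpd, hxs, hxg, hens⟩ := hz
  refine ⟨hbg, hbs, ?_, ?_, ?_, ?_, ?_, ?_, ?_, hxs, hxg, ?_⟩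
  · -- energy balance
    intro k hk
    have hTk := c.Tk_ne_zero hk
    show ∑ g : G, (∑ t ∈ c.cluster k, z.pg g t) / (c.Tk k : ℝ) * d.delta
        + ∑ n : N, ((∑ t ∈ c.cluster k, z.pd n t) / (c.Tk k : ℝ)
            - (∑ t ∈ c.cluster k, z.pc n t) / (c.Tk k : ℝ)) * d.delta
        + (∑ t ∈ c.cluster k, z.ens t) / (c.Tk k : ℝ) = Dhat d c k
    have e1 : ∑ g : G, (∑ t ∈ c.cluster k, z.pg g t) / (c.Tk k : ℝ) * d.delta
        = (∑ t ∈ c.cluster k, ∑ g : G, z.pg g t * d.delta) / (c.Tk k : ℝ) :=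
      calc ∑ g : G, (∑ t ∈ c.cluster k, z.pg g t) / (c.Tk k : ℝ) * d.delta
          = ∑ g : G, (∑ t ∈ c.cluster k, z.pg g t * d.delta) / (c.Tk k : ℝ) :=
            Finset.sum_congr rfl fun g _ => by
              rw [div_mul_eq_mul_div, Finset.sum_mul]
        _ = (∑ g : G, ∑ t ∈ c.cluster k, z.pg g t * d.delta) / (c.Tk k : ℝ) := by
            rw [Finset.sum_div]
        _ = _ := by rw [Finset.sum_comm]
    have e2 : ∑ n : N, ((∑ t ∈ c.cluster k, z.pd n t) / (c.Tk k : ℝ)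
            - (∑ t ∈ c.cluster k, z.pc n t) / (c.Tk k : ℝ)) * d.delta
        = (∑ t ∈ c.cluster k, ∑ n : N, (z.pd n t - z.pc n t) * d.delta)
            / (c.Tk k : ℝ) :=
      calc ∑ n : N, ((∑ t ∈ c.cluster k, z.pd n t) / (c.Tk k : ℝ)
            - (∑ t ∈ c.cluster k, z.pc n t) / (c.Tk k : ℝ)) * d.delta
          = ∑ n : N, (∑ t ∈ c.cluster k, (z.pd n t - z.pc n t) * d.delta)
              / (c.Tk k : ℝ) :=
            Finset.sum_congr rfl fun n _ => by
              rw [div_sub_div_same, div_mul_eq_mul_div, ← Finset.sum_sub_distrib,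
                Finset.sum_mul]
        _ = (∑ n : N, ∑ t ∈ c.cluster k, (z.pd n t - z.pc n t) * d.delta)
              / (c.Tk k : ℝ) := by rw [Finset.sum_div]
        _ = _ := by rw [Finset.sum_comm]
    rw [e1, e2, ← add_div, ← add_div, ← Finset.sum_add_distrib,
      ← Finset.sum_add_distrib]
    show (∑ t ∈ c.cluster k, (∑ g : G, z.pg g t * d.delta
        + ∑ n : N, (z.pd n t - z.pc n t) * d.delta + z.ens t)) / (c.Tk k : ℝ)
        = Dhat d c k
    rw [Finset.sum_congr rfl fun t ht => hbal t (c.mem_cluster_lt hk ht)]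
    rfl
  · -- storage dynamics
    intro n k hk
    have hTk := c.Tk_ne_zero (show k < K by omega)
    show z.es n (c.start (k + 1)) = z.es n (c.start k)
        + (d.etac n * ((∑ t ∈ c.cluster k, z.pc n t) / (c.Tk k : ℝ))
          - d.etad n * ((∑ t ∈ c.cluster k, z.pd n t) / (c.Tk k : ℝ)))
          * (c.Tk k : ℝ) * d.delta
    have htel := telescope (z.es n)
      (fun t => (d.etac n * z.pc n t - d.etad n * z.pd n t) * d.delta) (T - 1)
      (fun t ht => hdyn n t (by omega)) (c.start k) (c.start (k + 1))
      (le_of_lt (c.start_lt k (by omega)))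
      (by have := c.start_lt_T (show k + 1 < K from hk); omega)
    simp only [ConsecClustering.cluster]
    rw [htel]
    congr 1
    rw [← Finset.sum_mul, Finset.sum_sub_distrib, ← Finset.mul_sum,
      ← Finset.mul_sum]
    field_simp
    try ring
  · -- initial energy
    intro n
    show z.es n (c.start 0) = d.E0 n
    rw [c.start_zero]; exact hE0 n
  · -- generator bounds
    intro g k hk
    have hTkpos : (0 : ℝ) < (c.Tk k : ℝ) := by exact_mod_cast c.Tk_pos hk
    constructor
    · exact div_nonneg (Finset.sum_nonneg fun t ht =>
        (hpg g t (c.mem_cluster_lt hk ht)).1) (le_of_lt hTkpos)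
    · have h : ∑ t ∈ c.cluster k, z.pg g t
          ≤ (∑ t ∈ c.cluster k, d.F g t) * z.xg g := by
        rw [Finset.sum_mul]
        exact Finset.sum_le_sum fun t ht => (hpg g t (c.mem_cluster_lt hk ht)).2
      show (∑ t ∈ c.cluster k, z.pg g t) / (c.Tk k : ℝ) ≤ Fhat d c g k * z.xg g
      rw [Fhat, div_mul_eq_mul_div]
      exact (div_le_div_iff_of_pos_right hTkpos).mpr h
  · -- storage energy bounds
    intro n k hk
    exact hes n (c.start k) (c.start_lt_T hk)
  · -- charging bounds
    intro n k hk
    have hTkpos : (0 : ℝ) < (c.Tk k : ℝ) := by exact_mod_cast c.Tk_pos hk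
    constructor
    · exact div_nonneg (Finset.sum_nonneg fun t ht =>
        (hpc n t (c.mem_cluster_lt hk ht)).1) (le_of_lt hTkpos)
    · show (∑ t ∈ c.cluster k, z.pc n t) / (c.Tk k : ℝ)
          ≤ z.xs n * d.delta / d.Tn n
      rw [div_le_iff₀ hTkpos]
      calc ∑ t ∈ c.cluster k, z.pc n t
          ≤ ∑ t ∈ c.cluster k, z.xs n * d.delta / d.Tn n :=
            Finset.sum_le_sum fun t ht => (hpc n t (c.mem_cluster_lt hk ht)).2
        _ = (c.Tk k : ℝ) * (z.xs n * d.delta / d.Tn n) := by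
            rw [Finset.sum_const, c.card_cluster, nsmul_eq_mul]
        _ = z.xs n * d.delta / d.Tn n * (c.Tk k : ℝ) := by ring
  · -- discharging bounds
    intro n k hk
    have hTkpos : (0 : ℝ) < (c.Tk k : ℝ) := by exact_mod_cast c.Tk_pos hk
    constructor
    · exact div_nonneg (Finset.sum_nonneg fun t ht =>
        (hpd n t (c.mem_cluster_lt hk ht)).1) (le_of_lt hTkpos)
    · show (∑ t ∈ c.cluster k, z.pd n t) / (c.Tk k : ℝ)
          ≤ z.xs n * d.delta / d.Tn n
      rw [div_le_iff₀ hTkpos]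
      calc ∑ t ∈ c.cluster k, z.pd n t
          ≤ ∑ t ∈ c.cluster k, z.xs n * d.delta / d.Tn n :=
            Finset.sum_le_sum fun t ht => (hpd n t (c.mem_cluster_lt hk ht)).2
        _ = (c.Tk k : ℝ) * (z.xs n * d.delta / d.Tn n) := by
            rw [Finset.sum_const, c.card_cluster, nsmul_eq_mul]
        _ = z.xs n * d.delta / d.Tn n * (c.Tk k : ℝ) := by ring
  · -- non-supplied energy
    intro k hk
    have hTkpos : (0 : ℝ) < (c.Tk k : ℝ) := by exact_mod_cast c.Tk_pos hk
    exact div_nonneg (Finset.sum_nonneg fun t ht =>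
      hens t (c.mem_cluster_lt hk ht)) (le_of_lt hTkpos)

lemma agg_obj {G N : Type} [Fintype G] [Fintype N]
    (d : GEPData G N) {T K : ℕ} (c : ConsecClustering T K)
    (z : GEPVars G N) :
    objJagg d c (aggregate c z) = objJ d T z := by
  simp only [objJagg, objJ, aggregate]
  have key : ∀ k ∈ Finset.range K,
      (c.Tk k : ℝ) *
        (∑ g : G, d.Cpg g * ((∑ t ∈ c.cluster k, z.pg g t) / (c.Tk k : ℝ))
            * d.delta
          + ∑ n : N, (d.Cpc n * ((∑ t ∈ c.cluster k, z.pc n t) / (c.Tk k : ℝ))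
              + d.Cpd n * ((∑ t ∈ c.cluster k, z.pd n t) / (c.Tk k : ℝ)))
              * d.delta
          + d.Cns * ((∑ t ∈ c.cluster k, z.ens t) / (c.Tk k : ℝ)))
      = ∑ t ∈ c.cluster k, (∑ g : G, d.Cpg g * z.pg g t * d.delta
          + (∑ n : N, (d.Cpc n * z.pc n t + d.Cpd n * z.pd n t) * d.delta
            + d.Cns * z.ens t)) := by
    intro k hk
    have hTk := c.Tk_ne_zero (Finset.mem_range.mp hk)
    have e1 : ∑ g : G, d.Cpg g * ((∑ t ∈ c.cluster k, z.pg g t) / (c.Tk k : ℝ))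
            * d.delta
        = (∑ t ∈ c.cluster k, ∑ g : G, d.Cpg g * z.pg g t * d.delta)
            / (c.Tk k : ℝ) :=
      calc ∑ g : G, d.Cpg g * ((∑ t ∈ c.cluster k, z.pg g t) / (c.Tk k : ℝ))
              * d.delta
          = ∑ g : G, (∑ t ∈ c.cluster k, d.Cpg g * z.pg g t * d.delta)
              / (c.Tk k : ℝ) :=
            Finset.sum_congr rfl fun g _ => by
              rw [show d.Cpg g * ((∑ t ∈ c.cluster k, z.pg g t) / (c.Tk k : ℝ))
                    * d.delta
                  = (d.Cpg g * (∑ t ∈ c.cluster k, z.pg g t) * d.delta)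
                    / (c.Tk k : ℝ) from by ring,
                Finset.mul_sum, Finset.sum_mul]
        _ = (∑ g : G, ∑ t ∈ c.cluster k, d.Cpg g * z.pg g t * d.delta)
              / (c.Tk k : ℝ) := by rw [Finset.sum_div]
        _ = _ := by rw [Finset.sum_comm]
    have e2 : ∑ n : N, (d.Cpc n * ((∑ t ∈ c.cluster k, z.pc n t) / (c.Tk k : ℝ))
              + d.Cpd n * ((∑ t ∈ c.cluster k, z.pd n t) / (c.Tk k : ℝ)))
              * d.delta
        = (∑ t ∈ c.cluster k,
            ∑ n : N, (d.Cpc n * z.pc n t + d.Cpd n * z.pd n t) * d.delta)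
            / (c.Tk k : ℝ) :=
      calc ∑ n : N, (d.Cpc n * ((∑ t ∈ c.cluster k, z.pc n t) / (c.Tk k : ℝ))
              + d.Cpd n * ((∑ t ∈ c.cluster k, z.pd n t) / (c.Tk k : ℝ)))
              * d.delta
          = ∑ n : N, (∑ t ∈ c.cluster k,
              (d.Cpc n * z.pc n t + d.Cpd n * z.pd n t) * d.delta)
              / (c.Tk k : ℝ) :=
            Finset.sum_congr rfl fun n _ => by
              rw [eq_div_iff hTk, ← Finset.sum_mul, Finset.sum_add_distrib,
                ← Finset.mul_sum, ← Finset.mul_sum]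
              field_simp
              try ring
        _ = (∑ n : N, ∑ t ∈ c.cluster k,
              (d.Cpc n * z.pc n t + d.Cpd n * z.pd n t) * d.delta)
              / (c.Tk k : ℝ) := by rw [Finset.sum_div]
        _ = _ := by rw [Finset.sum_comm]
    have e3 : d.Cns * ((∑ t ∈ c.cluster k, z.ens t) / (c.Tk k : ℝ))
        = (∑ t ∈ c.cluster k, d.Cns * z.ens t) / (c.Tk k : ℝ) := by
      rw [mul_div_assoc', Finset.mul_sum]
    rw [e1, e2, e3, ← add_div, ← add_div,
      ← Finset.sum_add_distrib, ← Finset.sum_add_distrib,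
      mul_div_cancel₀ _ hTk]
    exact Finset.sum_congr rfl fun t _ => by ring
  rw [Finset.sum_congr rfl key, c.sum_cluster, Finset.sum_add_distrib]
  ring
end Aux

/-- Bracketing performance guarantee: if ẑ* is optimal for the
temporally aggregated GEP model (for some consecutive clustering), z* is optimal for
the full-scale GEP model, and z̃ is any feasible solution of the full-scale model
(e.g. obtained by fixing the investment variables to those of ẑ*), then
Ĵ(ẑ*) ≤ J(z*) ≤ J(z̃). -/
theorem bracketing_performance_guarantee
    {G N : Type} [Fintype G] [Fintype N] (d : GEPData G N) (T K : ℕ)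
    (hT : 1 ≤ T) (hdelta : 0 < d.delta) (hTn : ∀ n, 0 < d.Tn n)
    (hXg : ∀ g, d.Xgl g ≤ d.Xgu g) (hXs : ∀ n, d.Xsl n ≤ d.Xsu n)
    (c : ConsecClustering T K)
    (what : GEPVars G N) (hwhat : AggFeasible d c what)
    (hwopt : ∀ w, AggFeasible d c w → objJagg d c what ≤ objJagg d c w)
    (zstar : GEPVars G N) (hzstar : Feasible d T zstar)
    (hzopt : ∀ z, Feasible d T z → objJ d T zstar ≤ objJ d T z)
    (ztilde : GEPVars G N) (hztilde : Feasible d T ztilde) :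
    objJagg d c what ≤ objJ d T zstar ∧ objJ d T zstar ≤ objJ d T ztilde := by
  have hagg := agg_feasible d hT c zstar hzstar
  have hobj := agg_obj d c zstar
  exact ⟨hobj ▸ hwopt _ hagg, hzopt ztilde hztilde⟩
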